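/- arXiv:1610.02698 — 4 statements merged into one kernel-verified Lean document; each statement's English description precedes it below -/
import Mathlib

section
/- For every integer n ≥ 1, the number of barred permutations satisfies the recurrence b_{n+1} = C(n+1, 2)·b_{n-1} + (n+1)·b_n, where C(n+1,2) is the binomial coefficient, together with the initial conditions b_0 = b_1 = 1. -/
/-- A barred permutation of `[n]`: an ordered set partition of `Fin n` into
blocks of size 1 or 2, encoded as a list of pairwise disjoint subsets whose
union is everything. -/
def IsBarredPermutation {n : ℕ} (L : List (Finset (Fin n))) : Prop :=
  L.Pairwise Disjoint ∧ (∀ B ∈ L, B.card = 1 ∨ B.card = 2) ∧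
    L.foldr (· ∪ ·) ∅ = Finset.univ

/-- `barredCount n` is the number of barred permutations of `[n]`. -/
noncomputable def barredCount (n : ℕ) : ℕ :=
  Nat.card { L : List (Finset (Fin n)) // IsBarredPermutation L }

/-!
Removing the first block `B` of a barred permutation of a finite set `S` leaves a barred
permutation of `S \ B`, and every `B ⊆ S` of size 1 or 2 can be put in front of any barred
permutation of `S \ B`. Hence the count for `S` is the sum of the counts for `S \ B` over the
`|S|` singletons and `C(|S|, 2)` pairs `B`, and by strong induction on `|S|` it equals the value
`barredNumber |S|` of the recurrence. Working with arbitrary finite sets, rather than only with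
`Fin n`, makes the induction go through without relabelling.
-/

open Finset

namespace Finset

variable {α : Type*} [DecidableEq α]

theorem disjoint_foldr_union_iff {B : Finset α} {T : List (Finset α)} :
    Disjoint B (T.foldr (· ∪ ·) ∅) ↔ ∀ C ∈ T, Disjoint B C := by
  induction T with
  | nil => simp
  | cons C T ih => simp [disjoint_union_right, ih]

theorem union_eq_and_disjoint_iff {s t u : Finset α} :
    s ∪ t = u ∧ Disjoint s t ↔ s ⊆ u ∧ t = u \ s := by
  constructor
  · rintro ⟨rfl, hst⟩
    exact ⟨subset_union_left, (union_sdiff_cancel_left hst).symm⟩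
  · rintro ⟨hsu, rfl⟩
    exact ⟨union_sdiff_of_subset hsu, disjoint_sdiff⟩

end Finset

namespace BarredPermutation

variable {α : Type*} [DecidableEq α]

def IsBarredPermutationOf (S : Finset α) (L : List (Finset α)) : Prop :=
  L.Pairwise Disjoint ∧ (∀ B ∈ L, B.card = 1 ∨ B.card = 2) ∧
    L.foldr (· ∪ ·) ∅ = S

def blocks (S : Finset α) : Finset (Finset α) :=
  S.powersetCard 1 ∪ S.powersetCard 2

-- At `m = 0` the truncated `m - 1` is harmless, since `(0 + 1).choose 2 = 0`.
def barredNumber : ℕ → ℕ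
  | 0 => 1
  | m + 1 => (m + 1) * barredNumber m + (m + 1).choose 2 * barredNumber (m - 1)

theorem barredNumber_pos : ∀ m, 0 < barredNumber m
  | 0 => by simp [barredNumber]
  | m + 1 => by
    rw [barredNumber]
    have := barredNumber_pos m
    positivity

theorem mem_blocks {S B : Finset α} : B ∈ blocks S ↔ B ⊆ S ∧ (B.card = 1 ∨ B.card = 2) := by
  simp only [blocks, mem_union, mem_powersetCard, and_or_left]

theorem sum_blocks (S : Finset α) (g : ℕ → ℕ) :
    ∑ B ∈ blocks S, g (S \ B).card =
      S.card * g (S.card - 1) + S.card.choose 2 * g (S.card - 2) := by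
  have hconst : ∀ k, ∀ B ∈ S.powersetCard k, g (S \ B).card = g (S.card - k) := by
    intro k B hB
    rw [card_sdiff_of_subset (mem_powersetCard.1 hB).1, (mem_powersetCard.1 hB).2]
  rw [blocks, sum_union (pairwise_disjoint_powersetCard S (by decide)),
    sum_congr rfl (hconst 1), sum_congr rfl (hconst 2), sum_const, sum_const,
    card_powersetCard, card_powersetCard, Nat.choose_one_right, smul_eq_mul, smul_eq_mul]

theorem isBarredPermutationOf_nil {S : Finset α} : IsBarredPermutationOf S [] ↔ S = ∅ := by
  simp [IsBarredPermutationOf, eq_comm]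

theorem isBarredPermutationOf_cons {S B : Finset α} {T : List (Finset α)} :
    IsBarredPermutationOf S (B :: T) ↔ B ∈ blocks S ∧ IsBarredPermutationOf (S \ B) T := by
  simp only [IsBarredPermutationOf, List.pairwise_cons, List.forall_mem_cons, List.foldr_cons,
    mem_blocks, ← disjoint_foldr_union_iff]
  have := union_eq_and_disjoint_iff (s := B) (t := T.foldr (· ∪ ·) ∅) (u := S)
  tauto

theorem isBarredPermutationOf_empty {L : List (Finset α)} :
    IsBarredPermutationOf ∅ L ↔ L = [] := by
  cases L with
  | nil => simp [isBarredPermutationOf_nil]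
  | cons B T =>
    simp only [isBarredPermutationOf_cons, mem_blocks, subset_empty, reduceCtorEq, iff_false]
    rintro ⟨⟨rfl, h⟩, -⟩
    simp at h

def consEquiv {S : Finset α} (hS : S.Nonempty) :
    {L // IsBarredPermutationOf S L} ≃
      Σ B : blocks S, {T // IsBarredPermutationOf (S \ B) T} where
  toFun
    | ⟨[], h⟩ => absurd (isBarredPermutationOf_nil.1 h) hS.ne_empty
    | ⟨B :: T, h⟩ =>
      ⟨⟨B, (isBarredPermutationOf_cons.1 h).1⟩, ⟨T, (isBarredPermutationOf_cons.1 h).2⟩⟩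
  invFun x := ⟨x.1.1 :: x.2.1, isBarredPermutationOf_cons.2 ⟨x.1.2, x.2.2⟩⟩
  left_inv
    | ⟨[], h⟩ => absurd (isBarredPermutationOf_nil.1 h) hS.ne_empty
    | ⟨_ :: _, _⟩ => rfl
  right_inv _ := rfl

theorem card_isBarredPermutationOf (S : Finset α) :
    Nat.card {L // IsBarredPermutationOf S L} = barredNumber S.card := by
  induction hm : S.card using Nat.strong_induction_on generalizing S with
  | _ m ih =>
  subst hm
  rcases S.eq_empty_or_nonempty with rfl | hS
  · simp only [isBarredPermutationOf_empty, Nat.card_unique, card_empty, barredNumber]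
  have hfiber : ∀ B ∈ blocks S,
      Nat.card {T // IsBarredPermutationOf (S \ B) T} = barredNumber (S \ B).card := by
    intro B hB
    obtain ⟨hBS, hcard⟩ := mem_blocks.1 hB
    refine ih _ ?_ _ rfl
    rw [card_sdiff_of_subset hBS]
    have := card_le_card hBS
    omega
  -- `Nat.card` of an infinite type is `0`, so the positive counts make the fibres finite.
  have : ∀ B : blocks S, Finite {T // IsBarredPermutationOf (S \ B.1) T} := fun B =>
    Nat.finite_of_card_ne_zero ((hfiber B.1 B.2).trans_ne (barredNumber_pos _).ne')
  obtain ⟨m, hm⟩ := Nat.exists_eq_add_one.2 hS.card_pos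
  rw [Nat.card_congr (consEquiv hS), Nat.card_sigma, sum_coe_sort _ fun B =>
    Nat.card {T // IsBarredPermutationOf (S \ B) T}, sum_congr rfl hfiber, sum_blocks, hm,
    barredNumber]
  rfl

end BarredPermutation

/-- For every `n ≥ 1`, `b_{n+1} = C(n+1,2) * b_{n-1} + (n+1) * b_n`,
with initial conditions `b_0 = b_1 = 1`. -/
theorem barredCount_recurrence :
    barredCount 0 = 1 ∧ barredCount 1 = 1 ∧
      ∀ n : ℕ, 1 ≤ n →
        barredCount (n + 1) =
          Nat.choose (n + 1) 2 * barredCount (n - 1) + (n + 1) * barredCount n := by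
  open BarredPermutation in
  have hcount (n : ℕ) : barredCount n = barredNumber n := by
    have := card_isBarredPermutationOf (univ : Finset (Fin n))
    rwa [card_univ, Fintype.card_fin] at this
  refine ⟨by simp [hcount, barredNumber], by simp [hcount, barredNumber], fun n _ => ?_⟩
  rw [hcount, hcount, hcount, barredNumber, add_comm]
end

section
/- For every natural number n, the number of barred permutations of [n] satisfies the closed formula 2^n · b_n = n! · Σ_{i=0}^{⌊n/2⌋} C(n+1, 2i+1) · 3^i, where C(n+1, 2i+1) denotes a binomial coefficient. -/
/-!
Removing the first block of a barred permutation of an `m`-set leaves a barred permutation of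
the remaining `m - 1` or `m - 2` elements, so `b (m + 2) = (m + 2) b (m + 1) + C(m + 2, 2) b m`.
Hence `a n = 2^n b n / n!` satisfies `a (n + 2) = 2 a (n + 1) + 2 a n`. Since
`(1 + √3)^2 = 2 (1 + √3) + 2`, this is also the recurrence of the `√3`-coefficient `T m` of
`(1 + √3)^m`; comparing initial values gives `a n = T (n + 1)`, and the binomial theorem
expands `T (n + 1)` as the sum in the statement.
-/

open Finset
open scoped Nat

-- At `m = 0` the truncated `m - 1` is harmless: `choose 1 2 = 0`.
def barredNumber : ℕ → ℕ
  | 0 => 1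
  | m + 1 => (m + 1) * barredNumber m + (m + 1).choose 2 * barredNumber (m - 1)

theorem barredNumber_add_two (m : ℕ) :
    barredNumber (m + 2) = (m + 2) * barredNumber (m + 1) + (m + 2).choose 2 * barredNumber m := by
  rw [barredNumber]
  rfl

section BarredPermutation

variable {α : Type*} [DecidableEq α]

def IsBarredPermutationOf (s : Finset α) (L : List (Finset α)) : Prop :=
  L.Pairwise Disjoint ∧ (∀ B ∈ L, B.card = 1 ∨ B.card = 2) ∧ L.foldr (· ∪ ·) ∅ = s

def barredBlocks (s : Finset α) : Finset (Finset α) :=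
  s.powersetCard 1 ∪ s.powersetCard 2

theorem mem_barredBlocks {s B : Finset α} :
    B ∈ barredBlocks s ↔ B ⊆ s ∧ (B.card = 1 ∨ B.card = 2) := by
  simp only [barredBlocks, mem_union, mem_powersetCard, and_or_left]

theorem List.mem_foldr_union {L : List (Finset α)} {a : α} :
    a ∈ L.foldr (· ∪ ·) ∅ ↔ ∃ B ∈ L, a ∈ B := by
  induction L with
  | nil => simp
  | cons C L ih => simp [ih]

theorem List.subset_foldr_union {L : List (Finset α)} {B : Finset α} (hB : B ∈ L) :
    B ⊆ L.foldr (· ∪ ·) ∅ :=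
  fun _ ha => List.mem_foldr_union.mpr ⟨B, hB, ha⟩

theorem nonempty_of_mem_barredBlocks {s B : Finset α} (hB : B ∈ barredBlocks s) :
    B.Nonempty := by
  rw [← card_pos]
  rcases (mem_barredBlocks.mp hB).2 with h | h <;> omega

theorem isBarredPermutationOf_nil {s : Finset α} :
    IsBarredPermutationOf s [] ↔ s = ∅ := by
  simp [IsBarredPermutationOf, eq_comm]

theorem isBarredPermutationOf_cons {s B : Finset α} {L : List (Finset α)} :
    IsBarredPermutationOf s (B :: L) ↔
      B ∈ barredBlocks s ∧ IsBarredPermutationOf (s \ B) L := by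
  simp only [IsBarredPermutationOf, List.pairwise_cons, List.mem_cons, forall_eq_or_imp,
    List.foldr_cons, mem_barredBlocks]
  constructor
  · rintro ⟨⟨hBL, hL⟩, ⟨hBcard, hcard⟩, hunion⟩
    have hdisj : Disjoint B (L.foldr (· ∪ ·) ∅) :=
      disjoint_right.mpr fun a ha haB =>
        let ⟨C, hC, haC⟩ := List.mem_foldr_union.mp ha
        disjoint_left.mp (hBL C hC) haB haC
    refine ⟨⟨hunion ▸ subset_union_left, hBcard⟩, hL, hcard, ?_⟩
    rw [← hunion, union_sdiff_cancel_left hdisj]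
  · rintro ⟨⟨hBs, hBcard⟩, hL, hcard, hunion⟩
    refine ⟨⟨fun C hC => ?_, hL⟩, ⟨hBcard, hcard⟩, ?_⟩
    · exact disjoint_of_subset_right (hunion ▸ List.subset_foldr_union hC) disjoint_sdiff
    · rw [hunion, union_sdiff_of_subset hBs]

theorem isBarredPermutationOf_empty {L : List (Finset α)} :
    IsBarredPermutationOf ∅ L ↔ L = [] := by
  cases L with
  | nil => simp [isBarredPermutationOf_nil]
  | cons B L =>
    refine iff_of_false (fun h => ?_) (List.cons_ne_nil _ _)
    obtain ⟨hB, -⟩ := isBarredPermutationOf_cons.mp h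
    exact (nonempty_of_mem_barredBlocks hB).ne_empty (subset_empty.mp (mem_barredBlocks.mp hB).1)

noncomputable def barredConsEquiv (s : Finset α) (hs : s.Nonempty) :
    (Σ B : barredBlocks s, {L // IsBarredPermutationOf (s \ B) L}) ≃
      {L // IsBarredPermutationOf s L} :=
  Equiv.ofBijective
    (fun x => ⟨x.1.1 :: x.2.1, isBarredPermutationOf_cons.mpr ⟨x.1.2, x.2.2⟩⟩)
    (by
      constructor
      · rintro ⟨⟨B, _⟩, ⟨L, _⟩⟩ ⟨⟨B', _⟩, ⟨L', _⟩⟩ h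
        simp only [Subtype.mk.injEq, List.cons.injEq] at h
        obtain ⟨rfl, rfl⟩ := h
        rfl
      · rintro ⟨_ | ⟨B, L⟩, hL⟩
        · exact absurd (isBarredPermutationOf_nil.mp hL) hs.ne_empty
        · obtain ⟨hB, hL⟩ := isBarredPermutationOf_cons.mp hL
          exact ⟨⟨⟨B, hB⟩, ⟨L, hL⟩⟩, rfl⟩)

theorem sdiff_ssubset_of_mem_barredBlocks {s B : Finset α} (hB : B ∈ barredBlocks s) :
    s \ B ⊂ s :=
  sdiff_ssubset (mem_barredBlocks.mp hB).1 (nonempty_of_mem_barredBlocks hB)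

instance : Unique {L // IsBarredPermutationOf (∅ : Finset α) L} where
  default := ⟨[], isBarredPermutationOf_nil.mpr rfl⟩
  uniq := fun ⟨_, hL⟩ => Subtype.ext (isBarredPermutationOf_empty.mp hL)

instance finite_isBarredPermutationOf (s : Finset α) :
    Finite {L // IsBarredPermutationOf s L} := by
  induction s using Finset.strongInduction with
  | _ s ih =>
    rcases s.eq_empty_or_nonempty with rfl | hs
    · infer_instance
    · have := fun B : barredBlocks s => ih _ (sdiff_ssubset_of_mem_barredBlocks B.2)
      exact Finite.of_equiv _ (barredConsEquiv s hs)

theorem card_isBarredPermutationOf_of_nonempty {s : Finset α} (hs : s.Nonempty) :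
    Nat.card {L // IsBarredPermutationOf s L} =
      ∑ B ∈ barredBlocks s, Nat.card {L // IsBarredPermutationOf (s \ B) L} := by
  rw [← Nat.card_congr (barredConsEquiv s hs), Nat.card_sigma]
  exact sum_coe_sort (barredBlocks s) fun B => Nat.card {L // IsBarredPermutationOf (s \ B) L}

theorem sum_barredBlocks (s : Finset α) (f : ℕ → ℕ) :
    ∑ B ∈ barredBlocks s, f (s \ B).card =
      s.card * f (s.card - 1) + s.card.choose 2 * f (s.card - 2) := by
  have hdisj : Disjoint (s.powersetCard 1) (s.powersetCard 2) :=
    disjoint_left.mpr fun B h1 h2 => by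
      rw [mem_powersetCard] at h1 h2
      omega
  have hconst (k : ℕ) :
      ∑ B ∈ s.powersetCard k, f (s \ B).card = s.card.choose k * f (s.card - k) := by
    rw [sum_congr rfl fun B hB => by
      rw [card_sdiff_of_subset (mem_powersetCard.mp hB).1, (mem_powersetCard.mp hB).2]]
    rw [sum_const, card_powersetCard, smul_eq_mul]
  rw [barredBlocks, sum_union hdisj, hconst, hconst, Nat.choose_one_right]

theorem card_isBarredPermutationOf (s : Finset α) :
    Nat.card {L // IsBarredPermutationOf s L} = barredNumber s.card := by
  induction s using Finset.strongInduction with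
  | _ s ih =>
    rcases s.eq_empty_or_nonempty with rfl | hs
    · rw [Nat.card_unique, card_empty, barredNumber]
    obtain ⟨m, hm⟩ : ∃ m, s.card = m + 1 := Nat.exists_eq_succ_of_ne_zero hs.card_pos.ne'
    rw [card_isBarredPermutationOf_of_nonempty hs,
      sum_congr rfl fun B hB => ih _ (sdiff_ssubset_of_mem_barredBlocks hB),
      sum_barredBlocks, hm, barredNumber]
    rfl

end BarredPermutation

theorem barredCount_eq_barredNumber (n : ℕ) : barredCount n = barredNumber n := by
  have h := card_isBarredPermutationOf (univ : Finset (Fin n))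
  rwa [card_univ, Fintype.card_fin] at h

section BinomialSums

variable (d : ℕ)

-- `(1 + √d) ^ m = evenBinomSum d m + oddBinomSum d m * √d`
def evenBinomSum (m : ℕ) : ℕ := ∑ i ∈ range (m + 1), m.choose (2 * i) * d ^ i

def oddBinomSum (m : ℕ) : ℕ := ∑ i ∈ range (m + 1), m.choose (2 * i + 1) * d ^ i

theorem oddBinomSum_succ (m : ℕ) :
    oddBinomSum d (m + 1) = evenBinomSum d m + oddBinomSum d m := by
  have hvanish : ∀ i ≥ m + 1, m.choose (2 * i) * d ^ i + m.choose (2 * i + 1) * d ^ i = 0 :=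
    fun i hi => by
      rw [Nat.choose_eq_zero_of_lt (by omega), Nat.choose_eq_zero_of_lt (by omega), zero_mul,
        add_zero]
  rw [evenBinomSum, oddBinomSum, oddBinomSum, ← sum_add_distrib,
    ← eventually_constant_sum hvanish (m + 1).le_succ]
  exact sum_congr rfl fun i _ => by rw [Nat.choose_succ_succ', add_mul]

theorem evenBinomSum_succ (m : ℕ) :
    evenBinomSum d (m + 1) = evenBinomSum d m + d * oddBinomSum d m := by
  have hvanish : ∀ i ≥ m + 1, m.choose (2 * i) * d ^ i = 0 :=
    fun i hi => by rw [Nat.choose_eq_zero_of_lt (by omega), zero_mul]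
  have heven :
      evenBinomSum d m = ∑ i ∈ range (m + 1), m.choose (2 * i + 2) * d ^ (i + 1) + 1 := by
    rw [evenBinomSum, ← eventually_constant_sum hvanish (m + 1).le_succ, sum_range_succ']
    simp [mul_add]
  have hpascal : ∀ i, (m + 1).choose (2 * (i + 1)) * d ^ (i + 1) =
      m.choose (2 * i + 2) * d ^ (i + 1) + d * (m.choose (2 * i + 1) * d ^ i) := fun i => by
    rw [show 2 * (i + 1) = 2 * i + 1 + 1 by ring, Nat.choose_succ_succ']
    ring
  rw [evenBinomSum, sum_range_succ', sum_congr rfl fun i _ => hpascal i, sum_add_distrib, heven,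
    oddBinomSum, mul_sum]
  simp only [Nat.choose_zero_right, mul_zero, pow_zero, mul_one]
  ring

theorem oddBinomSum_add_two (m : ℕ) :
    oddBinomSum d (m + 2) + oddBinomSum d m = 2 * oddBinomSum d (m + 1) + d * oddBinomSum d m := by
  have h1 := oddBinomSum_succ d (m + 1)
  have h2 := oddBinomSum_succ d m
  have h3 := evenBinomSum_succ d m
  linarith

end BinomialSums

theorem two_pow_mul_barredNumber : ∀ n : ℕ, 2 ^ n * barredNumber n = n ! * oddBinomSum 3 (n + 1)
  | 0 => by simp [barredNumber, oddBinomSum, sum_range_succ, Nat.choose_eq_zero_of_lt]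
  | 1 => by simp [barredNumber, oddBinomSum, sum_range_succ, Nat.choose_eq_zero_of_lt]
  | n + 2 => by
    have hchoose : (n + 2).choose 2 * 2 = (n + 2) * (n + 1) := by
      rw [← Nat.add_one_mul_choose_eq, Nat.choose_one_right]
    have hodd : oddBinomSum 3 (n + 3) = 2 * oddBinomSum 3 (n + 2) + 2 * oddBinomSum 3 (n + 1) := by
      have : oddBinomSum 3 (n + 3) + oddBinomSum 3 (n + 1) =
          2 * oddBinomSum 3 (n + 2) + 3 * oddBinomSum 3 (n + 1) := oddBinomSum_add_two 3 (n + 1)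
      omega
    calc 2 ^ (n + 2) * barredNumber (n + 2)
        = 2 * (n + 2) * (2 ^ (n + 1) * barredNumber (n + 1)) +
            2 * ((n + 2).choose 2 * 2) * (2 ^ n * barredNumber n) := by
          rw [barredNumber_add_two]; ring
      _ = 2 * (n + 2) * ((n + 1)! * oddBinomSum 3 (n + 2)) +
            2 * ((n + 2) * (n + 1)) * (n ! * oddBinomSum 3 (n + 1)) := by
          rw [two_pow_mul_barredNumber (n + 1), two_pow_mul_barredNumber n, hchoose]
      _ = (n + 2)! * oddBinomSum 3 (n + 3) := by
          rw [hodd, Nat.factorial_succ (n + 1), Nat.factorial_succ n]; ring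

/-- `2^n · b_n = n! · Σ_{i=0}^{⌊n/2⌋} C(n+1, 2i+1) · 3^i`. -/
theorem barredCount_closed_formula (n : ℕ) :
    2 ^ n * barredCount n =
      n.factorial * ∑ i ∈ Finset.range (n / 2 + 1), Nat.choose (n + 1) (2 * i + 1) * 3 ^ i := by
  have hvanish : ∀ i ≥ n / 2 + 1, (n + 1).choose (2 * i + 1) * 3 ^ i = 0 :=
    fun i hi => by rw [Nat.choose_eq_zero_of_lt (by omega), zero_mul]
  rw [← eventually_constant_sum hvanish (by omega : n / 2 + 1 ≤ n + 2),
    barredCount_eq_barredNumber]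
  exact two_pow_mul_barredNumber n
end

section
/- Define rational numbers a_k = b_k / k! for k ≥ 0. Then a_0 = a_1 = 1 and for every k ≥ 2 one has a_k = a_{k−1} + (1/2)·a_{k−2}. -/
/-!
Deleting the first block `B` of a barred permutation of a finite set `s` leaves a barred
permutation of `s \ B`, and `B` is one of the `n` singletons or `C(n, 2)` pairs of `s`, where
`n = #s`. Hence `b n = n b (n - 1) + C(n, 2) b (n - 2)`, and dividing by `n!` turns this into
`a n = a (n - 1) + a (n - 2) / 2`. Counting over an arbitrary finite set `s` rather than `Fin n`
is what lets the induction pass to `s \ B` without relabelling.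
-/

open Finset

namespace BarredPermutation

variable {α : Type*} [DecidableEq α]

theorem disjoint_foldr_union_right {B : Finset α} {L : List (Finset α)} :
    Disjoint B (L.foldr (· ∪ ·) ∅) ↔ ∀ C ∈ L, Disjoint B C := by
  induction L with
  | nil => simp
  | cons C L ih => simp [ih]

/-- `IsBarredPermutation` is the case `s = univ`. -/
def IsBarredOn (s : Finset α) (L : List (Finset α)) : Prop :=
  L.Pairwise Disjoint ∧ (∀ B ∈ L, B.card = 1 ∨ B.card = 2) ∧ L.foldr (· ∪ ·) ∅ = s

def barBlocks (s : Finset α) : Finset (Finset α) :=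
  s.powersetCard 1 ∪ s.powersetCard 2

theorem mem_barBlocks {s B : Finset α} :
    B ∈ barBlocks s ↔ B ⊆ s ∧ (B.card = 1 ∨ B.card = 2) := by
  simp only [barBlocks, mem_union, mem_powersetCard]
  tauto

variable {s : Finset α}

theorem IsBarredOn.nodup {L : List (Finset α)} (h : IsBarredOn s L) : L.Nodup := by
  refine h.1.imp_of_mem fun {B _} hB _ hBC hBB => ?_
  subst hBB
  have hB : B.Nonempty := card_pos.1 (by rcases h.2.1 B hB with h | h <;> omega)
  exact hB.ne_empty (disjoint_self.1 hBC)

instance [Fintype α] (s : Finset α) : Finite {L : List (Finset α) // IsBarredOn s L} :=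
  Finite.of_injective (fun L => (⟨L.1, L.2.nodup⟩ : {l : List (Finset α) // l.Nodup}))
    fun _ _ h => Subtype.ext (Subtype.mk.inj h)

theorem isBarredOn_nil_iff : IsBarredOn s [] ↔ s = ∅ := by
  simp [IsBarredOn, eq_comm]

theorem isBarredOn_cons_iff {B : Finset α} {T : List (Finset α)} :
    IsBarredOn s (B :: T) ↔ B ∈ barBlocks s ∧ IsBarredOn (s \ B) T := by
  simp only [IsBarredOn, List.pairwise_cons, List.forall_mem_cons, List.foldr_cons,
    mem_barBlocks, ← disjoint_foldr_union_right]
  constructor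
  · rintro ⟨⟨hBT, hT⟩, ⟨hB, hTcard⟩, rfl⟩
    exact ⟨⟨subset_union_left, hB⟩, hT, hTcard, (union_sdiff_cancel_left hBT).symm⟩
  · rintro ⟨⟨hBs, hB⟩, hT, hTcard, hTs⟩
    rw [hTs]
    exact ⟨⟨disjoint_sdiff, hT⟩, ⟨hB, hTcard⟩, union_sdiff_of_subset hBs⟩

theorem eq_nil_of_isBarredOn_empty {L : List (Finset α)} (h : IsBarredOn ∅ L) : L = [] := by
  cases L with
  | nil => rfl
  | cons B T =>
    obtain ⟨hB, hcard⟩ := mem_barBlocks.1 (isBarredOn_cons_iff.1 h).1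
    simp [subset_empty.1 hB] at hcard

theorem card_isBarredOn_empty : Nat.card {L : List (Finset α) // IsBarredOn ∅ L} = 1 :=
  Nat.card_eq_one_iff_exists.2 ⟨⟨[], isBarredOn_nil_iff.2 rfl⟩,
    fun L => Subtype.ext (eq_nil_of_isBarredOn_empty L.2)⟩

theorem card_isBarredOn_of_nonempty [Fintype α] (hs : s.Nonempty) :
    Nat.card {L : List (Finset α) // IsBarredOn s L}
      = ∑ B ∈ barBlocks s, Nat.card {T : List (Finset α) // IsBarredOn (s \ B) T} := by
  rw [← sum_coe_sort, ← Nat.card_sigma]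
  refine (Nat.card_eq_of_bijective (fun p => ⟨p.1.1 :: p.2.1,
    isBarredOn_cons_iff.2 ⟨p.1.2, p.2.2⟩⟩) ⟨?_, ?_⟩).symm
  · rintro ⟨⟨B, _⟩, ⟨T, _⟩⟩ ⟨⟨B', _⟩, ⟨T', _⟩⟩ h
    obtain ⟨rfl, rfl⟩ := List.cons.inj (congrArg Subtype.val h)
    rfl
  · rintro ⟨_ | ⟨B, T⟩, h⟩
    · exact absurd (isBarredOn_nil_iff.1 h) hs.ne_empty
    · obtain ⟨hB, hT⟩ := isBarredOn_cons_iff.1 h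
      exact ⟨⟨⟨B, hB⟩, ⟨T, hT⟩⟩, rfl⟩

theorem sum_barBlocks {M : Type*} [AddCommMonoid M] (s : Finset α) (f : ℕ → M) :
    ∑ B ∈ barBlocks s, f B.card = s.card • f 1 + s.card.choose 2 • f 2 := by
  have hdisj : Disjoint (s.powersetCard 1) (s.powersetCard 2) :=
    disjoint_left.2 fun B h1 h2 => by
      rw [mem_powersetCard] at h1 h2
      omega
  rw [barBlocks, sum_union hdisj,
    sum_congr rfl fun B hB => congrArg f (mem_powersetCard.1 hB).2,
    sum_congr rfl fun B hB => congrArg f (mem_powersetCard.1 hB).2,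
    sum_const, sum_const, card_powersetCard, card_powersetCard, Nat.choose_one_right]

/-- At `n = 0` the coefficient `choose 1 2` vanishes, so the truncated `n - 1` is harmless. -/
def barredRec : ℕ → ℕ
  | 0 => 1
  | n + 1 => (n + 1) * barredRec n + (n + 1).choose 2 * barredRec (n - 1)

theorem card_isBarredOn [Fintype α] (s : Finset α) :
    Nat.card {L : List (Finset α) // IsBarredOn s L} = barredRec s.card := by
  induction hn : s.card using Nat.strong_induction_on generalizing s with
  | _ n ih =>
  rcases s.eq_empty_or_nonempty with rfl | hs
  · subst hn
    simp [card_isBarredOn_empty, barredRec]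
  obtain ⟨n, rfl⟩ : ∃ m, n = m + 1 := Nat.exists_eq_succ_of_ne_zero (hn ▸ hs.card_ne_zero)
  have hterm : ∀ B ∈ barBlocks s, Nat.card {T : List (Finset α) // IsBarredOn (s \ B) T}
      = barredRec (n + 1 - B.card) := fun B hB => by
    obtain ⟨hBs, hB⟩ := mem_barBlocks.1 hB
    exact ih _ (by omega) _ (by rw [card_sdiff_of_subset hBs, hn])
  rw [card_isBarredOn_of_nonempty hs, sum_congr rfl hterm,
    sum_barBlocks s fun k => barredRec (n + 1 - k), hn, barredRec]
  simp

theorem barredRec_div_factorial (m : ℕ) :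
    (barredRec (m + 2) / (m + 2).factorial : ℚ)
      = barredRec (m + 1) / (m + 1).factorial + 1 / 2 * (barredRec m / m.factorial) := by
  rw [barredRec, Nat.add_sub_cancel, Nat.factorial_succ (m + 1), Nat.factorial_succ m]
  push_cast [Nat.cast_choose_two]
  field_simp
  ring

end BarredPermutation

theorem barredCount_eq_barredRec (n : ℕ) : barredCount n = BarredPermutation.barredRec n := by
  have h := BarredPermutation.card_isBarredOn (univ : Finset (Fin n))
  rwa [card_univ, Fintype.card_fin] at h

/-- The rational numbers `a_k = b_k / k!` satisfy `a_0 = a_1 = 1` and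
`a_k = a_{k−1} + (1/2) a_{k−2}` for all `k ≥ 2`. -/
theorem barredCount_normalized_recurrence (a : ℕ → ℚ)
    (ha : ∀ k, a k = (barredCount k : ℚ) / k.factorial) :
    a 0 = 1 ∧ a 1 = 1 ∧ ∀ k, 2 ≤ k → a k = a (k - 1) + (1 / 2) * a (k - 2) := by
  simp only [ha, barredCount_eq_barredRec]
  refine ⟨by simp [BarredPermutation.barredRec], by simp [BarredPermutation.barredRec], ?_⟩
  intro k hk
  obtain ⟨m, rfl⟩ := Nat.exists_eq_add_of_le' hk
  simpa using BarredPermutation.barredRec_div_factorial m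
end

section
/- For every integer n ≥ 1 there exists an admissible sequence of length n; that is, there exists a strictly increasing function a : {0,…,n−1} → ℤ such that Σ_{i=0}^{n−1} a_i = 0, such that a_i + a_j < a_k + a_l whenever i, j, k < l, and such that 2·a_i < a_j + a_k whenever i, j < k. -/
/-!
The powers `3 ^ i` already satisfy the two inequality conditions, because `2 * 3 ^ i < 3 ^ l`
for `i < l`. Both conditions, and strict monotonicity, survive any map `x ↦ c * x + d` with
`c > 0`; taking `c = n` and `d = -∑ j, 3 ^ j` makes the sum vanish.
-/

section AdmissibleShape

variable {ι κ α : Type*} [LinearOrder ι] [LinearOrder κ] [CommRing α] [LinearOrder α]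

/-- Conditions (b), (c), (d) of an admissible sequence: all but the zero sum. -/
def AdmissibleShape (a : ι → α) : Prop :=
  StrictMono a ∧
    (∀ i j k l, i < l → j < l → k < l → a i + a j < a k + a l) ∧
    (∀ i j k, i < k → j < k → 2 * a i < a j + a k)

theorem AdmissibleShape.comp {b : κ → α} (hb : AdmissibleShape b) {f : ι → κ}
    (hf : StrictMono f) : AdmissibleShape (b ∘ f) := by
  obtain ⟨hmono, hsum, hdouble⟩ := hb
  exact ⟨hmono.comp hf,
    fun i j k l hi hj hk => hsum _ _ _ _ (hf hi) (hf hj) (hf hk),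
    fun i j k hi hj => hdouble _ _ _ (hf hi) (hf hj)⟩

variable [IsStrictOrderedRing α]

theorem AdmissibleShape.mul_add {a : ι → α} (ha : AdmissibleShape a) {c : α} (hc : 0 < c)
    (d : α) : AdmissibleShape fun i => c * a i + d := by
  obtain ⟨hmono, hsum, hdouble⟩ := ha
  refine ⟨fun i j hij => ?_, fun i j k l hi hj hk => ?_, fun i j k hi hj => ?_⟩
  · simpa using mul_lt_mul_of_pos_left (hmono hij) hc
  · have := mul_lt_mul_of_pos_left (hsum i j k l hi hj hk) hc
    linear_combination this
  · have := mul_lt_mul_of_pos_left (hdouble i j k hi hj) hc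
    linear_combination this

theorem two_mul_pow_three_lt_pow_three {i l : ℕ} (h : i < l) : 2 * (3 : α) ^ i < 3 ^ l :=
  calc 2 * (3 : α) ^ i < 3 * 3 ^ i := by gcongr; norm_num
    _ = 3 ^ (i + 1) := (pow_succ' 3 i).symm
    _ ≤ 3 ^ l := pow_le_pow_right₀ (by norm_num) h

theorem admissibleShape_pow_three : AdmissibleShape fun i : ℕ => (3 : α) ^ i := by
  refine ⟨pow_right_strictMono₀ (by norm_num), fun i j k l hi hj hk => ?_,
    fun i j k hi hj => ?_⟩
  · have := two_mul_pow_three_lt_pow_three (α := α) hi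
    have := two_mul_pow_three_lt_pow_three (α := α) hj
    have : (0 : α) < 3 ^ k := by positivity
    linarith
  · have := two_mul_pow_three_lt_pow_three (α := α) hi
    have : (0 : α) < 3 ^ j := by positivity
    linarith

end AdmissibleShape

/-- For every `n ≥ 1` there exists an admissible sequence of length `n`:
a strictly increasing `a : Fin n → ℤ` with `Σ a i = 0`, with
`a i + a j < a k + a l` whenever `i, j, k < l`, and `2 a i < a j + a k`
whenever `i, j < k`. -/
theorem exists_admissible_sequence (n : ℕ) (hn : 1 ≤ n) :
    ∃ a : Fin n → ℤ,
      StrictMono a ∧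
      (∑ i, a i) = 0 ∧
      (∀ i j k l : Fin n, i < l → j < l → k < l → a i + a j < a k + a l) ∧
      (∀ i j k : Fin n, i < k → j < k → 2 * a i < a j + a k) := by
  set b : Fin n → ℤ := fun i => 3 ^ (i : ℕ)
  have hb : AdmissibleShape b := admissibleShape_pow_three.comp Fin.val_strictMono
  obtain ⟨hmono, hsum, hdouble⟩ :=
    hb.mul_add (c := n) (by exact_mod_cast hn) (-∑ j, b j)
  refine ⟨_, hmono, ?_, hsum, hdouble⟩
  simp [Finset.sum_add_distrib, ← Finset.mul_sum]
end
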